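/- arXiv:2504.13520 — 3 statements merged into one kernel-verified Lean document; each statement's English description precedes it below -/
import Mathlib

section
/- Consider the hyper-g/n prior with density p(g) = ((a−2)/(2n)) (1 + g/n)^{−a/2} on g > 0, with a > 2. For any fixed integer c ≥ 1, the integral ∫_0^∞ (1+g)^{c/2} p(g) dg tends to infinity as n → ∞. -/
open Real MeasureTheory Filter

/-!
On the window `n < g < 2n` the factor `(1 + g)^{c/2}` is at least `n^{c/2}` and the tail
factor `(1 + g/n)^{-a/2}` is at least `3^{-a/2}`, while the window has length `n`, which
cancels the normalisation `1/n`. Hence the integral is at least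
`(a - 2)/2 · 3^{-a/2} · n^{c/2}`, which tends to infinity because `c/2 > 0`.
-/

theorem ofReal_mul_measure_le_setLIntegral {α : Type*} [MeasurableSpace α] {μ : Measure α}
    {s t : Set α} (hts : t ⊆ s) (ht : MeasurableSet t) {f : α → ℝ} {m : ℝ}
    (hf : ∀ x ∈ t, m ≤ f x) :
    ENNReal.ofReal m * μ t ≤ ∫⁻ x in s, ENNReal.ofReal (f x) ∂μ :=
  calc ENNReal.ofReal m * μ t = ∫⁻ _ in t, ENNReal.ofReal m ∂μ := (setLIntegral_const t _).symm
    _ ≤ ∫⁻ x in t, ENNReal.ofReal (f x) ∂μ :=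
      setLIntegral_mono' ht fun x hx => ENNReal.ofReal_le_ofReal (hf x hx)
    _ ≤ ∫⁻ x in s, ENNReal.ofReal (f x) ∂μ := lintegral_mono_set hts

theorem rpow_mul_mul_three_rpow_neg_le {n g s b K : ℝ} (hn : 0 < n) (hng : n ≤ g)
    (hg : g ≤ 2 * n) (hs : 0 ≤ s) (hb : 0 ≤ b) (hK : 0 ≤ K) :
    n ^ s * K * 3 ^ (-b) ≤ (1 + g) ^ s * K * (1 + g / n) ^ (-b) := by
  have hg0 : 0 < g := hn.trans_le hng
  have hgrowth : n ^ s ≤ (1 + g) ^ s := rpow_le_rpow hn.le (by linarith) hs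
  have hdecay : (3 : ℝ) ^ (-b) ≤ (1 + g / n) ^ (-b) := by
    have : g / n ≤ 2 := by rw [div_le_iff₀ hn]; linarith
    exact rpow_le_rpow_of_nonpos (by positivity) (by linarith) (by linarith)
  gcongr

theorem tendsto_ofReal_const_mul_natCast_rpow_atTop {k s : ℝ} (hk : 0 < k) (hs : 0 < s) :
    Tendsto (fun n : ℕ => ENNReal.ofReal (k * (n : ℝ) ^ s)) atTop (nhds ⊤) :=
  ENNReal.tendsto_ofReal_atTop.comp <|
    ((tendsto_rpow_atTop hs).comp tendsto_natCast_atTop_atTop).const_mul_atTop hk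

/-- For the hyper-g/n prior `p(g) = ((a−2)/(2n))(1+g/n)^{−a/2}` on `g > 0` with `a > 2`,
and any fixed integer `c ≥ 1`, the integral `∫_0^∞ (1+g)^{c/2} p(g) dg` tends to
infinity as `n → ∞`. -/
theorem hyper_g_over_n_integral_diverges (a : ℝ) (ha : 2 < a) (c : ℕ) (hc : 1 ≤ c) :
    Tendsto (fun n : ℕ =>
      ∫⁻ g in Set.Ioi (0 : ℝ), ENNReal.ofReal
        ((1 + g) ^ ((c : ℝ) / 2) * ((a - 2) / (2 * (n : ℝ))) *
          (1 + g / (n : ℝ)) ^ (-(a / 2))))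
      atTop (nhds ⊤) := by
  have hk : 0 < (a - 2) / 2 * (3 : ℝ) ^ (-(a / 2)) := by
    have : 0 < a - 2 := by linarith
    positivity
  have hs : 0 < (c : ℝ) / 2 := by
    have : (0 : ℝ) < c := by exact_mod_cast hc
    positivity
  refine tendsto_nhds_top_mono (tendsto_ofReal_const_mul_natCast_rpow_atTop hk hs) ?_
  filter_upwards [eventually_gt_atTop 0] with n hn
  replace hn : (0 : ℝ) < n := by exact_mod_cast hn
  have hK : 0 ≤ (a - 2) / (2 * (n : ℝ)) := div_nonneg (by linarith) (by positivity)
  calc ENNReal.ofReal ((a - 2) / 2 * (3 : ℝ) ^ (-(a / 2)) * (n : ℝ) ^ ((c : ℝ) / 2))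
      = ENNReal.ofReal ((n : ℝ) ^ ((c : ℝ) / 2) * ((a - 2) / (2 * (n : ℝ))) *
          (3 : ℝ) ^ (-(a / 2))) * volume (Set.Ioo (n : ℝ) (2 * n)) := by
        rw [Real.volume_Ioo, ← ENNReal.ofReal_mul (by positivity)]
        congr 1
        field_simp
        ring
    _ ≤ _ := ofReal_mul_measure_le_setLIntegral (fun g hg => hn.trans hg.1) measurableSet_Ioo
        fun g hg => rpow_mul_mul_three_rpow_neg_le hn hg.1.le hg.2.le hs.le (by linarith) hK
end

section
/- Define B_Σ = I_l + (1/σ_{y|x}) Σ_yx^⊤ Σ_yx Σ_xx^{-1} and A_Σ = ((I_l + g^{-1} B_Σ^{-1})^{-1})^⊤ Σ_xx^{-1} B_Σ, where Σ_xx is symmetric positive definite, σ_{y|x} > 0, Σ_yx is a 1×l row vector, and g > 0. Then A_Σ is symmetric positive semidefinite. -/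
/-!
Write `P = Σxx⁻¹`. Then `P * B_Σ = P + (1/σ) (Σyx P)ᵀ (Σyx P)` is positive definite, and with
`D = I + g⁻¹ B_Σ⁻¹` one has `P B_Σ D = P B_Σ + g⁻¹ P`, again positive definite. Hence `D` is
invertible and `A_Σ = (D⁻¹)ᵀ (P B_Σ + g⁻¹ P) D⁻¹` is a congruence of a positive definite matrix.
-/

open Matrix
open scoped ComplexOrder

section

variable {n 𝕜 : Type*} [Fintype n] [DecidableEq n] [RCLike 𝕜]

theorem Matrix.PosDef.mul_one_add_mul_self {P Q : Matrix n n 𝕜} (hP : P.PosDef)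
    (hQ : Q.PosSemidef) : (P * (1 + Q * P)).PosDef := by
  have hPQP : P * (Q * P) = Pᴴ * Q * P := by rw [hP.isHermitian.eq, Matrix.mul_assoc]
  rw [Matrix.mul_add, Matrix.mul_one, hPQP]
  exact hP.add_posSemidef (hQ.conjTranspose_mul_mul_same P)

theorem Matrix.PosDef.conjTranspose_inv_one_add_smul_inv_mul {P B : Matrix n n 𝕜}
    (hP : P.PosDef) (hPB : (P * B).PosDef) {c : ℝ} (hc : 0 ≤ c) :
    (((1 + c • B⁻¹)⁻¹)ᴴ * P * B).PosDef := by
  set D : Matrix n n 𝕜 := 1 + c • B⁻¹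
  set M : Matrix n n 𝕜 := P * B + c • P
  have hM : M.PosDef := hPB.add_posSemidef (hP.posSemidef.smul hc)
  have hB : IsUnit B := isUnit_of_mul_isUnit_right hPB.isUnit
  have hPBD : P * B * D = M := by
    rw [Matrix.mul_add, Matrix.mul_one, Matrix.mul_smul, Matrix.mul_assoc,
      Matrix.mul_nonsing_inv _ ((isUnit_iff_isUnit_det B).mp hB), Matrix.mul_one]
  have hD : IsUnit D := isUnit_of_mul_isUnit_right (hPBD ▸ hM.isUnit)
  have hPB_eq : P * B = M * D⁻¹ := by
    rw [← hPBD, Matrix.mul_assoc, Matrix.mul_nonsing_inv _ ((isUnit_iff_isUnit_det D).mp hD),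
      Matrix.mul_one]
  rw [Matrix.mul_assoc, hPB_eq, ← Matrix.mul_assoc]
  exact hM.conjTranspose_mul_mul_same (mulVec_injective_of_isUnit (isUnit_nonsing_inv_iff.mpr hD))

end

/-- With `B_Σ = I + (1/σ_{y|x}) Σyxᵀ Σyx Σxx⁻¹` and
`A_Σ = ((I + g⁻¹ B_Σ⁻¹)⁻¹)ᵀ Σxx⁻¹ B_Σ`, where `Σxx` is symmetric positive definite,
`σ_{y|x} > 0` and `g > 0`, the matrix `A_Σ` is symmetric positive semidefinite. -/
theorem A_Sigma_posSemidef (l : ℕ)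
    (Sxx : Matrix (Fin l) (Fin l) ℝ) (hxx : Sxx.PosDef)
    (Syx : Matrix (Fin 1) (Fin l) ℝ) (σ g : ℝ) (hσ : 0 < σ) (hg : 0 < g)
    (B A : Matrix (Fin l) (Fin l) ℝ)
    (hB : B = 1 + (1 / σ) • (Syxᵀ * Syx * Sxx⁻¹))
    (hA : A = ((1 + g⁻¹ • B⁻¹)⁻¹)ᵀ * Sxx⁻¹ * B) :
    A.PosSemidef := by
  have hQ : ((1 / σ) • (Syxᵀ * Syx)).PosSemidef := by
    refine PosSemidef.smul ?_ (by positivity)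
    simpa only [conjTranspose_eq_transpose_of_trivial] using posSemidef_conjTranspose_mul_self Syx
  have hPB : (Sxx⁻¹ * B).PosDef := by
    rw [hB, ← smul_mul_assoc]
    exact hxx.inv.mul_one_add_mul_self hQ
  rw [hA, ← conjTranspose_eq_transpose_of_trivial]
  exact (hxx.inv.conjTranspose_inv_one_add_smul_inv_mul hPB (inv_nonneg.mpr hg.le)).posSemidef
end

section
/- Under the model prior with independent Beta-binomial inclusion for outcome and treatment models with p candidate variables and uniform prior on model size for each, the induced prior probability that the number of valid and relevant instruments N_Z (variables in the treatment model but not in the outcome model) equals k is p(N_Z=k) = (1/(p+1)) Σ_{p_i=0}^{p} Σ_{m=0}^{p_i} 1{0 ≤ k ≤ p−p_i} C(p_i, p_i−m) C(p−p_i, k) Γ(1+p_i+k−m)Γ(1+p−p_i−k+m)/Γ(p+2), and these probabilities sum to 1 over k = 0,…,p. -/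
/-!
Split a treatment model `M` as `(M ∩ L) ∪ (M \ L)`. For a fixed outcome model `L` with
`p_i` variables, the models `M` with `|M ∩ L| = a` and `|M \ L| = k` number
`C(p_i, a) C(p - p_i, k)`, and each has prior mass `1 / ((p + 1) C(p, a + k)) =
(a + k)! (p - a - k)! / (p + 1)!`; with `a = p_i - m` this is the summand of the formula.
Summing over `L` by size, the `C(p, p_i)` outcome models of size `p_i` cancel their own prior
mass down to `1 / (p + 1)`. The probabilities sum to one because the joint prior is a product of
two probability distributions.
-/

open Finset Nat

noncomputable def sizePrior (n j : ℕ) : ℝ := 1 / ((n + 1) * n.choose j)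

lemma choose_mul_sizePrior {n j : ℕ} (h : j ≤ n) :
    (n.choose j : ℝ) * sizePrior n j = 1 / (n + 1) := by
  have : (n.choose j : ℝ) ≠ 0 := by exact_mod_cast (choose_pos h).ne'
  rw [sizePrior]
  field_simp

lemma sizePrior_eq_factorial {n j : ℕ} (h : j ≤ n) :
    sizePrior n j = (j ! * (n - j)! : ℕ) / ((n + 1)! : ℝ) := by
  rw [sizePrior, factorial_succ, ← choose_mul_factorial_mul_factorial h]
  have : (j ! * (n - j)! : ℝ) ≠ 0 := by positivity
  push_cast
  field_simp

section Subsets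

variable {α : Type*} [Fintype α]

lemma sum_sizePrior_card_mul (g : ℕ → ℝ) :
    ∑ S : Finset α, sizePrior (Fintype.card α) #S * g #S
      = 1 / (Fintype.card α + 1) * ∑ j ∈ range (Fintype.card α + 1), g j := by
  rw [← powerset_univ, sum_powerset_apply_card (fun j => sizePrior (Fintype.card α) j * g j),
    Finset.card_univ, mul_sum]
  refine sum_congr rfl fun j hj => ?_
  rw [nsmul_eq_mul, ← mul_assoc, choose_mul_sizePrior (Nat.lt_succ_iff.mp (mem_range.mp hj))]

lemma sum_sizePrior_card : ∑ S : Finset α, sizePrior (Fintype.card α) #S = 1 := by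
  have h := sum_sizePrior_card_mul (α := α) fun _ => 1
  simp only [mul_one, sum_const, card_range, nsmul_eq_mul, cast_add, cast_one] at h
  rw [h]
  field_simp

lemma sum_univ_eq_sum_powerset_sum_powerset_compl [DecidableEq α] {β : Type*} [AddCommMonoid β]
    (L : Finset α) (G : Finset α → β) :
    ∑ M, G M = ∑ A ∈ L.powerset, ∑ B ∈ Lᶜ.powerset, G (A ∪ B) := by
  rw [← sum_product']
  refine sum_nbij' (fun M => (M ∩ L, M \ L)) (fun AB => AB.1 ∪ AB.2) ?_ ?_ ?_ ?_ ?_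
  · intro M _
    simp only [mem_product, mem_powerset]
    exact ⟨inter_subset_right, fun x hx => by simp [(mem_sdiff.mp hx).2]⟩
  · intro _ _
    exact mem_univ _
  · intro M _
    exact (union_comm _ _).trans (sdiff_union_inter M L)
  · rintro ⟨A, B⟩ hAB
    simp only [mem_product, mem_powerset, subset_compl_iff_disjoint_right] at hAB
    obtain ⟨hA, hB⟩ := hAB
    refine Prod.ext ?_ ?_ <;> dsimp only
    · rw [union_inter_distrib_right, inter_eq_left.mpr hA, disjoint_iff_inter_eq_empty.mp hB,
        union_empty]
    · rw [union_sdiff_distrib, sdiff_eq_empty_iff_subset.mpr hA, empty_union,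
        sdiff_eq_self_of_disjoint hB]
  · intro M _
    rw [union_comm, sdiff_union_inter]

lemma sum_ite_card_sdiff_eq [DecidableEq α] (L : Finset α) (k : ℕ) (g : ℕ → ℝ) :
    (∑ M : Finset α, if #(M \ L) = k then g #M else 0)
      = (#Lᶜ).choose k * ∑ a ∈ range (#L + 1), (#L).choose a * g (a + k) := by
  have hsplit : ∀ A ∈ L.powerset, ∀ B ∈ Lᶜ.powerset,
      (if #((A ∪ B) \ L) = k then g #(A ∪ B) else 0) = if #B = k then g (#A + #B) else 0 := by
    intro A hA B hB
    rw [mem_powerset] at hA hB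
    have hBL : Disjoint B L := subset_compl_iff_disjoint_right.mp hB
    rw [union_sdiff_distrib, sdiff_eq_empty_iff_subset.mpr hA, empty_union,
      sdiff_eq_self_of_disjoint hBL, card_union_of_disjoint (hBL.mono_right hA).symm]
  have hpick : ∀ a : ℕ, (∑ B ∈ Lᶜ.powerset, if #B = k then g (a + #B) else 0)
      = (#Lᶜ).choose k * g (a + k) := by
    intro a
    rw [sum_powerset_apply_card (fun b => if b = k then g (a + b) else 0)]
    simp only [smul_ite, smul_zero, sum_ite_eq', mem_range, nsmul_eq_mul]
    split_ifs with hk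
    · rfl
    · rw [choose_eq_zero_of_lt (by omega), cast_zero, zero_mul]
  rw [sum_univ_eq_sum_powerset_sum_powerset_compl L]
  simp_rw [sum_congr rfl fun A hA => sum_congr rfl (hsplit A hA), hpick]
  rw [sum_powerset_apply_card (fun a => (#Lᶜ).choose k * g (a + k)), mul_sum]
  simp only [nsmul_eq_mul]
  exact sum_congr rfl fun _ _ => by ring

lemma sum_sizePrior_mul_sizePrior_card_sdiff_eq [DecidableEq α] (k : ℕ) :
    (∑ L : Finset α, ∑ M : Finset α, if #(M \ L) = k then
        sizePrior (Fintype.card α) #L * sizePrior (Fintype.card α) #M else 0)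
      = 1 / (Fintype.card α + 1) * ∑ j ∈ range (Fintype.card α + 1),
          ((Fintype.card α - j).choose k : ℝ) *
            ∑ a ∈ range (j + 1), (j.choose a : ℝ) * sizePrior (Fintype.card α) (a + k) := by
  simp_rw [← mul_ite_zero, ← mul_sum, sum_ite_card_sdiff_eq, card_compl]
  exact sum_sizePrior_card_mul fun j => ((Fintype.card α - j).choose k : ℝ) *
    ∑ a ∈ range (j + 1), (j.choose a : ℝ) * sizePrior (Fintype.card α) (a + k)

end Subsets

lemma choose_mul_sum_sizePrior_eq {p pi : ℕ} (hpi : pi ≤ p) (k : ℕ) :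
    ((p - pi).choose k : ℝ) * ∑ a ∈ range (pi + 1), (pi.choose a : ℝ) * sizePrior p (a + k)
      = ∑ m ∈ range (pi + 1),
          if k ≤ p - pi then
            (((pi.choose (pi - m)) * ((p - pi).choose k) *
              (pi + k - m)! * (p - pi - k + m)! : ℕ) : ℝ) / ((p + 1)! : ℝ)
          else 0 := by
  split_ifs with hk
  · rw [mul_sum, ← sum_range_reflect]
    refine sum_congr rfl fun m hm => ?_
    have hm : m ≤ pi := Nat.lt_succ_iff.mp (mem_range.mp hm)
    rw [add_tsub_cancel_right, sizePrior_eq_factorial (by omega),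
      show pi + k - m = pi - m + k by omega, show p - pi - k + m = p - (pi - m + k) by omega]
    push_cast
    ring
  · rw [choose_eq_zero_of_lt (by omega), cast_zero, zero_mul, sum_const_zero]

/-- Under independent Beta-binomial (uniform-on-model-size) priors on the outcome model
`L` and the treatment model `M`, the induced prior on the number
`N_Z = |M \ L|` of valid and relevant instruments is
`p(N_Z = k) = (1/(p+1)) Σ_{p_i=0}^{p} Σ_{m=0}^{p_i} 1{k ≤ p−p_i} C(p_i, p_i−m) C(p−p_i, k)
  (p_i+k−m)! (p−p_i−k+m)! / (p+1)!`, and these probabilities sum to one. -/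
theorem instrument_number_prior (p : ℕ)
    (prior : Finset (Fin p) → ℝ)
    (hprior : ∀ S, prior S = 1 / (((p : ℝ) + 1) * (p.choose S.card)))
    (f : ℕ → ℝ)
    (hf : ∀ k, f k = (1 / ((p : ℝ) + 1)) *
      ∑ pi ∈ Finset.range (p + 1), ∑ m ∈ Finset.range (pi + 1),
        (if k ≤ p - pi then
          (((pi.choose (pi - m)) * ((p - pi).choose k) *
            (pi + k - m).factorial * (p - pi - k + m).factorial : ℕ) : ℝ) /
            ((p + 1).factorial : ℝ)
        else 0)) :
    (∀ k, (∑ L : Finset (Fin p), ∑ M : Finset (Fin p),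
        if (M \ L).card = k then prior L * prior M else 0) = f k)
    ∧ ∑ k ∈ Finset.range (p + 1), f k = 1 := by
  obtain rfl : prior = fun S => sizePrior (Fintype.card (Fin p)) #S :=
    funext fun S => by rw [hprior, sizePrior, Fintype.card_fin]
  have hcount : ∀ k, (∑ L : Finset (Fin p), ∑ M : Finset (Fin p),
      if #(M \ L) = k then
        sizePrior (Fintype.card (Fin p)) #L * sizePrior (Fintype.card (Fin p)) #M else 0) = f k := by
    intro k
    rw [sum_sizePrior_mul_sizePrior_card_sdiff_eq, hf, Fintype.card_fin]
    congr 1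
    exact sum_congr rfl fun pi hpi =>
      choose_mul_sum_sizePrior_eq (Nat.lt_succ_iff.mp (mem_range.mp hpi)) k
  refine ⟨hcount, ?_⟩
  calc ∑ k ∈ range (p + 1), f k
      = ∑ L : Finset (Fin p), ∑ M : Finset (Fin p),
          sizePrior (Fintype.card (Fin p)) #L * sizePrior (Fintype.card (Fin p)) #M := by
        simp_rw [← hcount]
        rw [sum_comm]
        refine sum_congr rfl fun L _ => ?_
        rw [sum_comm]
        refine sum_congr rfl fun M _ => ?_
        rw [sum_ite_eq, if_pos (mem_range.mpr (Nat.lt_succ_of_le ?_))]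
        simpa using card_le_univ (M \ L)
    _ = 1 := by rw [← sum_mul_sum, sum_sizePrior_card, one_mul]
end
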